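/- arXiv:1711.04363 — 3 statements merged into one kernel-verified Lean document; each statement's English description precedes it below -/
import Mathlib

section
/- Let S be a minimal total dominating set of the cycle C_n. Then every connected component of the induced subgraph C_n[S] is a path on 2, 3, or 4 vertices, and no three consecutive vertices of C_n all lie outside S. -/
open Finset

variable {V : Type*} [Fintype V] [DecidableEq V]

def IsTDS (G : SimpleGraph V) (S : Finset V) : Prop :=
  ∀ v : V, ∃ s ∈ S, G.Adj v s

def IsMTDS (G : SimpleGraph V) (S : Finset V) : Prop :=
  IsTDS G S ∧ ∀ T : Finset V, T ⊂ S → ¬ IsTDS G T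

section Aux

open scoped Fin.NatCast Fin.CommRing

variable {m : ℕ} {S : Finset (Fin (m + 3))}

lemma aux_adj {u v : Fin (m + 3)} :
    (SimpleGraph.cycleGraph (m + 3)).Adj u v ↔ u - v = 1 ∨ v - u = 1 :=
  SimpleGraph.cycleGraph_adj (n := m + 1)

lemma aux_castinj {j j' : ℕ} (hj : j < m + 3) (hj' : j' < m + 3)
    (h : (j : Fin (m + 3)) = (j' : Fin (m + 3))) : j = j' := by
  have := congrArg Fin.val h
  simpa [Fin.val_natCast, Nat.mod_eq_of_lt hj, Nat.mod_eq_of_lt hj'] using this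

/-- domination: every vertex has a neighbour in S -/
lemma aux_dom (hS : IsTDS (SimpleGraph.cycleGraph (m + 3)) S) (x : Fin (m + 3)) :
    x - 1 ∈ S ∨ x + 1 ∈ S := by
  obtain ⟨s, hs, hadj⟩ := hS x
  rcases aux_adj.mp hadj with h | h
  · left; rw [show x - 1 = s from by linear_combination h]; exact hs
  · right; rw [show x + 1 = s from by linear_combination -h]; exact hs

/-- no 5 consecutive vertices of S -/
lemma aux_no5 (hS : IsMTDS (SimpleGraph.cycleGraph (m + 3)) S) (s : Fin (m + 3))
    (h2 : s - 2 ∈ S) (h1 : s - 1 ∈ S) (h0 : s ∈ S) (h1' : s + 1 ∈ S) (h2' : s + 2 ∈ S) :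
    False := by
  have hne : ∀ t : Fin (m + 3), t + 2 ≠ t := by
    intro t h
    have h2 : (2 : Fin (m + 3)) = 0 := by linear_combination h
    have := congrArg Fin.val h2
    simp [Fin.val_two] at this
    rw [Nat.mod_eq_of_lt (by omega)] at this
    omega
  apply hS.2 (S.erase s) (Finset.erase_ssubset h0)
  intro v
  obtain ⟨t, htS, hadj⟩ := hS.1 v
  by_cases hts : t = s
  · subst hts
    rcases aux_adj.mp hadj with h | h
    · -- v = t + 1
      refine ⟨t + 2, Finset.mem_erase.2 ⟨hne t, h2'⟩, aux_adj.mpr (Or.inr ?_)⟩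
      linear_combination -h
    · -- v = t - 1
      refine ⟨t - 2, Finset.mem_erase.2 ⟨?_, h2⟩, aux_adj.mpr (Or.inl ?_)⟩
      · intro he; exact hne (t - 2) (by linear_combination -he)
      · linear_combination -h
  · exact ⟨t, Finset.mem_erase.2 ⟨hts, htS⟩, hadj⟩

/-- left endpoint of the run containing v -/
lemma aux_left (hS : IsMTDS (SimpleGraph.cycleGraph (m + 3)) S) {v : Fin (m + 3)}
    (hv : v ∈ S) : ∃ d : ℕ, (∀ j ≤ d, v - (d : Fin (m + 3)) + (j : Fin (m + 3)) ∈ S) ∧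
      v - (d : Fin (m + 3)) - 1 ∉ S := by
  by_cases h1 : v - 1 ∈ S
  · by_cases h2 : v - 2 ∈ S
    · by_cases h3 : v - 3 ∈ S
      · refine ⟨3, ?_, ?_⟩
        · intro j hj
          interval_cases j
          · rw [show v - ((3:ℕ) : Fin (m+3)) + ((0:ℕ) : Fin (m+3)) = v - 3 from by push_cast; ring]; exact h3
          · rw [show v - ((3:ℕ) : Fin (m+3)) + ((1:ℕ) : Fin (m+3)) = v - 2 from by push_cast; ring]; exact h2
          · rw [show v - ((3:ℕ) : Fin (m+3)) + ((2:ℕ) : Fin (m+3)) = v - 1 from by push_cast; ring]; exact h1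
          · rw [show v - ((3:ℕ) : Fin (m+3)) + ((3:ℕ) : Fin (m+3)) = v from by push_cast; ring]; exact hv
        · intro h4
          exact aux_no5 hS (v - 2)
            (by rw [show v - 2 - 2 = v - ((3:ℕ) : Fin (m+3)) - 1 from by push_cast; ring]; exact h4)
            (by rw [show v - 2 - 1 = v - 3 from by ring]; exact h3)
            h2
            (by rw [show v - 2 + 1 = v - 1 from by ring]; exact h1)
            (by rw [show v - 2 + 2 = v from by ring]; exact hv)
      · refine ⟨2, ?_, ?_⟩
        · intro j hj
          interval_cases j
          · rw [show v - ((2:ℕ) : Fin (m+3)) + ((0:ℕ) : Fin (m+3)) = v - 2 from by push_cast; ring]; exact h2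
          · rw [show v - ((2:ℕ) : Fin (m+3)) + ((1:ℕ) : Fin (m+3)) = v - 1 from by push_cast; ring]; exact h1
          · rw [show v - ((2:ℕ) : Fin (m+3)) + ((2:ℕ) : Fin (m+3)) = v from by push_cast; ring]; exact hv
        · rw [show v - ((2:ℕ) : Fin (m+3)) - 1 = v - 3 from by push_cast; ring]; exact h3
    · refine ⟨1, ?_, ?_⟩
      · intro j hj
        interval_cases j
        · rw [show v - ((1:ℕ) : Fin (m+3)) + ((0:ℕ) : Fin (m+3)) = v - 1 from by push_cast; ring]; exact h1
        · rw [show v - ((1:ℕ) : Fin (m+3)) + ((1:ℕ) : Fin (m+3)) = v from by push_cast; ring]; exact hv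
      · rw [show v - ((1:ℕ) : Fin (m+3)) - 1 = v - 2 from by push_cast; ring]; exact h2
  · refine ⟨0, ?_, ?_⟩
    · intro j hj
      interval_cases j
      rw [show v - ((0:ℕ) : Fin (m+3)) + ((0:ℕ) : Fin (m+3)) = v from by push_cast; ring]; exact hv
    · rw [show v - ((0:ℕ) : Fin (m+3)) - 1 = v - 1 from by push_cast; ring]; exact h1

/-- the run containing v -/
lemma aux_run (hS : IsMTDS (SimpleGraph.cycleGraph (m + 3)) S) {v : Fin (m + 3)}
    (hv : v ∈ S) : ∃ (a : Fin (m + 3)) (k : ℕ), 2 ≤ k ∧ k ≤ 4 ∧ k < m + 3 ∧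
      (∀ j < k, a + (j : Fin (m + 3)) ∈ S) ∧ a - 1 ∉ S ∧ a + (k : Fin (m + 3)) ∉ S ∧
      ∃ d < k, v = a + (d : Fin (m + 3)) := by
  obtain ⟨d, hmem, hL⟩ := aux_left hS hv
  set a := v - (d : Fin (m + 3)) with ha
  have hex : ∃ k : ℕ, a + (k : Fin (m + 3)) ∉ S := by
    by_contra hc
    push_neg at hc
    exact aux_no5 hS (a + 2)
      (by rw [show a + 2 - 2 = a + ((0:ℕ) : Fin (m+3)) from by push_cast; ring]; exact hc 0)
      (by rw [show a + 2 - 1 = a + ((1:ℕ) : Fin (m+3)) from by push_cast; ring]; exact hc 1)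
      (by rw [show a + 2 = a + ((2:ℕ) : Fin (m+3)) from by push_cast; ring]; exact hc 2)
      (by rw [show a + 2 + 1 = a + ((3:ℕ) : Fin (m+3)) from by push_cast; ring]; exact hc 3)
      (by rw [show a + 2 + 2 = a + ((4:ℕ) : Fin (m+3)) from by push_cast; ring]; exact hc 4)
  set k := Nat.find hex with hk
  have hkspec : a + (k : Fin (m + 3)) ∉ S := Nat.find_spec hex
  have hmem' : ∀ j < k, a + (j : Fin (m + 3)) ∈ S := by
    intro j hj
    by_contra hc
    exact Nat.find_min hex hj hc
  have hdk : d < k := by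
    by_contra hc
    push_neg at hc
    exact hkspec (hmem k hc)
  have ha0 : a + ((0:ℕ) : Fin (m+3)) ∈ S := by
    rw [show a + ((0:ℕ) : Fin (m+3)) = a from by push_cast; ring]
    simpa using hmem 0 (Nat.zero_le d)
  have ha1 : a + ((1:ℕ) : Fin (m+3)) ∈ S := by
    rcases aux_dom hS.1 a with h | h
    · exact absurd h hL
    · rw [show a + ((1:ℕ) : Fin (m+3)) = a + 1 from by push_cast; ring]; exact h
  have hk2 : 2 ≤ k := by
    by_contra hc
    have : k = 0 ∨ k = 1 := by omega
    rcases this with h | h <;> rw [h] at hkspec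
    · exact hkspec ha0
    · exact hkspec ha1
  have hk4 : k ≤ 4 := by
    by_contra hc
    push_neg at hc
    exact aux_no5 hS (a + 2)
      (by rw [show a + 2 - 2 = a + ((0:ℕ) : Fin (m+3)) from by push_cast; ring]; exact hmem' 0 (by omega))
      (by rw [show a + 2 - 1 = a + ((1:ℕ) : Fin (m+3)) from by push_cast; ring]; exact hmem' 1 (by omega))
      (by rw [show a + 2 = a + ((2:ℕ) : Fin (m+3)) from by push_cast; ring]; exact hmem' 2 (by omega))
      (by rw [show a + 2 + 1 = a + ((3:ℕ) : Fin (m+3)) from by push_cast; ring]; exact hmem' 3 (by omega))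
      (by rw [show a + 2 + 2 = a + ((4:ℕ) : Fin (m+3)) from by push_cast; ring]; exact hmem' 4 (by omega))
  have hkn : k < m + 3 := by
    by_contra hc
    push_neg at hc
    have h1 : ((m + 2 : ℕ) : Fin (m + 3)) = -1 := by
      have h : ((m + 3 : ℕ) : Fin (m + 3)) = 0 := by exact_mod_cast Fin.natCast_self (m + 3)
      push_cast at h ⊢
      linear_combination h
    have := hmem' (m + 2) (by omega)
    rw [h1] at this
    exact hL (by rw [show a - 1 = a + (-1) from by ring]; exact this)
  refine ⟨a, k, hk2, hk4, hkn, hmem', hL, hkspec, d, hdk, by ring⟩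

lemma aux_adj_run {k : ℕ} (hkn : k < m + 3) {j j' : ℕ} (hj : j < k) (hj' : j' < k)
    (a : Fin (m + 3)) :
    (SimpleGraph.cycleGraph (m + 3)).Adj (a + (j : Fin (m + 3))) (a + (j' : Fin (m + 3))) ↔
      (j + 1 = j' ∨ j' + 1 = j) := by
  rw [aux_adj]
  constructor
  · rintro (h | h)
    · right
      refine aux_castinj (m := m) (j := j' + 1) (j' := j) (by omega) (by omega) ?_
      push_cast
      linear_combination -h
    · left
      refine aux_castinj (m := m) (j := j + 1) (j' := j') (by omega) (by omega) ?_
      push_cast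
      linear_combination -h
  · rintro (h | h)
    · right
      have h' : ((j + 1 : ℕ) : Fin (m + 3)) = ((j' : ℕ) : Fin (m + 3)) := by rw [h]
      push_cast at h'
      linear_combination -h'
    · left
      have h' : ((j' + 1 : ℕ) : Fin (m + 3)) = ((j : ℕ) : Fin (m + 3)) := by rw [h]
      push_cast at h'
      linear_combination -h'

/-- walks stay within the run -/
lemma aux_closed {a : Fin (m + 3)} {k : ℕ}
    (hL : a - 1 ∉ S) (hR : a + (k : Fin (m + 3)) ∉ S)
    (x y : {u : Fin (m + 3) // u ∈ (↑S : Set (Fin (m + 3)))})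
    (w : (SimpleGraph.induce (↑S : Set (Fin (m + 3))) (SimpleGraph.cycleGraph (m + 3))).Walk x y)
    (hx : ∃ j < k, x.1 = a + (j : Fin (m + 3))) : ∃ j < k, y.1 = a + (j : Fin (m + 3)) := by
  induction w with
  | nil => exact hx
  | @cons u b y' hadj p ih =>
    apply ih
    obtain ⟨j, hj, hxe⟩ := hx
    have hadj' : (SimpleGraph.cycleGraph (m + 3)).Adj (a + (j : Fin (m + 3))) b.1 := by
      rw [← hxe]; exact hadj
    rcases aux_adj.mp hadj' with h | h
    · cases j with
      | zero =>
        exfalso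
        apply hL
        have hb : b.1 = a - 1 := by push_cast at h ⊢; linear_combination -h
        rw [← hb]; exact b.2
      | succ i =>
        exact ⟨i, by omega, by push_cast at h ⊢; linear_combination -h⟩
    · by_cases hjk : j + 1 < k
      · exact ⟨j + 1, hjk, by push_cast at h ⊢; linear_combination h⟩
      · exfalso
        apply hR
        have hjk' : ((j + 1 : ℕ) : Fin (m + 3)) = (k : Fin (m + 3)) := by
          congr 1; omega
        have hb : b.1 = a + (k : Fin (m + 3)) := by
          rw [← hjk']; push_cast at h ⊢; linear_combination h
        rw [← hb]; exact b.2

end Aux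

theorem stmt_17 (n : ℕ) (hn : 3 ≤ n) [NeZero n]
    (S : Finset (Fin n)) (hS : IsMTDS (SimpleGraph.cycleGraph n) S) :
    (∀ v : Fin n, ∀ hv : v ∈ (↑S : Set (Fin n)), ∃ m : ℕ, (m = 2 ∨ m = 3 ∨ m = 4) ∧
      Nonempty
        ((SimpleGraph.induce
            (((SimpleGraph.induce (↑S : Set (Fin n)) (SimpleGraph.cycleGraph n)).connectedComponentMk
              ⟨v, hv⟩).supp)
            (SimpleGraph.induce (↑S : Set (Fin n)) (SimpleGraph.cycleGraph n))) ≃g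
          SimpleGraph.pathGraph m)) ∧
    (∀ i : Fin n, ¬ (i ∉ S ∧ i + 1 ∉ S ∧ i + 2 ∉ S)) := by
  open scoped Fin.NatCast Fin.CommRing in
  obtain ⟨m, rfl⟩ : ∃ m, n = m + 3 := ⟨n - 3, by omega⟩
  constructor
  · intro v hv
    set H := SimpleGraph.induce (↑S : Set (Fin (m + 3))) (SimpleGraph.cycleGraph (m + 3)) with hH
    have hvS : v ∈ S := hv
    obtain ⟨a, k, hk2, hk4, hkn, hmem, hL, hR, d, hdk, hvd⟩ := aux_run hS hvS
    -- the run vertices, as vertices of H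
    have hmemS : ∀ j (_ : j < k), (a + (j : Fin (m + 3))) ∈ (↑S : Set (Fin (m + 3))) :=
      fun j hj => hmem j hj
    set f : ∀ j, j < k → {u : Fin (m + 3) // u ∈ (↑S : Set (Fin (m + 3)))} :=
      fun j hj => ⟨a + (j : Fin (m + 3)), hmemS j hj⟩ with hf
    -- all run vertices are reachable from the left endpoint
    have hreach : ∀ j (hj : j < k), H.Reachable (f 0 (by omega)) (f j hj) := by
      intro j
      induction j with
      | zero => intro hj; exact SimpleGraph.Reachable.refl _
      | succ i ih =>
        intro hj
        refine (ih (by omega)).trans (SimpleGraph.Adj.reachable ?_)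
        show (SimpleGraph.cycleGraph (m + 3)).Adj (a + (i : Fin (m + 3)))
          (a + ((i + 1 : ℕ) : Fin (m + 3)))
        exact (aux_adj_run hkn (by omega) hj a).mpr (Or.inl rfl)
    have hvf : (⟨v, hv⟩ : {u : Fin (m + 3) // u ∈ (↑S : Set (Fin (m + 3)))}) = f d hdk :=
      Subtype.ext hvd
    set C := H.connectedComponentMk ⟨v, hv⟩ with hC
    -- the map into the component
    have hsupp : ∀ j (hj : j < k), f j hj ∈ C.supp := by
      intro j hj
      rw [SimpleGraph.ConnectedComponent.mem_supp_iff, hC, hvf]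
      exact SimpleGraph.ConnectedComponent.sound (((hreach j hj).symm).trans (hreach d hdk))
    set F : Fin k → {z // z ∈ C.supp} := fun j => ⟨f j.1 j.2, hsupp j.1 j.2⟩ with hF
    have hFinj : Function.Injective F := by
      intro j j' h
      have h1 : a + ((j.1 : ℕ) : Fin (m + 3)) = a + ((j'.1 : ℕ) : Fin (m + 3)) :=
        congrArg (fun z => z.1.1) h
      have h2 : ((j.1 : ℕ) : Fin (m + 3)) = ((j'.1 : ℕ) : Fin (m + 3)) := by
        linear_combination h1
      exact Fin.ext (aux_castinj (by omega) (by omega) h2)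
    have hFsurj : Function.Surjective F := by
      rintro ⟨z, hz⟩
      rw [SimpleGraph.ConnectedComponent.mem_supp_iff] at hz
      have hr : H.Reachable (⟨v, hv⟩ : {u : Fin (m + 3) // u ∈ (↑S : Set (Fin (m + 3)))}) z :=
        (SimpleGraph.ConnectedComponent.exact hz).symm
      obtain ⟨w⟩ := hr
      obtain ⟨j, hj, hze⟩ := aux_closed hL hR _ _ w ⟨d, hdk, hvd⟩
      exact ⟨⟨j, hj⟩, Subtype.ext (Subtype.ext hze.symm)⟩
    refine ⟨k, by omega, ⟨(SimpleGraph.Iso.symm ⟨Equiv.ofBijective F ⟨hFinj, hFsurj⟩, ?_⟩ :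
      _ ≃g SimpleGraph.pathGraph k)⟩⟩
    intro j j'
    show (SimpleGraph.cycleGraph (m + 3)).Adj (a + ((j.1 : ℕ) : Fin (m + 3)))
      (a + ((j'.1 : ℕ) : Fin (m + 3))) ↔ (SimpleGraph.pathGraph k).Adj j j'
    rw [aux_adj_run hkn j.2 j'.2 a, SimpleGraph.pathGraph_adj]
  · -- no three consecutive gaps
    rintro i ⟨h0, h1, h2⟩
    rcases aux_dom hS.1 (i + 1) with h | h
    · exact h0 (by rw [show i = i + 1 - 1 from by ring]; exact h)
    · exact h2 (by rw [show i + 2 = i + 1 + 1 from by ring]; exact h)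
end

section
/- Let n = 4k with k ≥ 2. Then the (2k+1)-total dominating graph D_{2k+1}^t(C_n) is disconnected; in particular, each of the four γ_t-sets of C_n (which have size 2k) lies in a different component. -/
open Finset

variable {V : Type*} [Fintype V] [DecidableEq V]

/-- The `k`-total dominating graph: vertices are total dominating sets of size at most `k`,
adjacent iff they differ by adding or deleting one vertex. -/
def TDGraph (G : SimpleGraph V) (k : ℕ) :
    SimpleGraph {S : Finset V // IsTDS G S ∧ S.card ≤ k} :=
  SimpleGraph.fromRel (fun A B => A.1 ⊆ B.1 ∧ B.1.card = A.1.card + 1)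

namespace Stmt18Aux

variable {n : ℕ} [NeZero n]

lemma val_one (hn : 2 ≤ n) : (1 : Fin n).val = 1 := by
  obtain ⟨m, rfl⟩ : ∃ m, n = m + 2 := ⟨n - 2, by omega⟩
  rfl

lemma val_two (hn : 3 ≤ n) : (2 : Fin n).val = 2 := by
  obtain ⟨m, rfl⟩ : ∃ m, n = m + 3 := ⟨n - 3, by omega⟩
  rfl

lemma adj_succ (hn : 2 ≤ n) (v : Fin n) : (SimpleGraph.cycleGraph n).Adj v (v + 1) := by
  rw [SimpleGraph.cycleGraph_adj']
  right
  rw [add_sub_cancel_left, val_one hn]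

lemma adj_pred (hn : 2 ≤ n) (v : Fin n) : (SimpleGraph.cycleGraph n).Adj v (v - 1) := by
  rw [SimpleGraph.cycleGraph_adj']
  left
  rw [sub_sub_cancel, val_one hn]

lemma cover (hn : 2 ≤ n) {S : Finset (Fin n)} (h : IsTDS (SimpleGraph.cycleGraph n) S)
    (w : Fin n) : w ∈ S ∨ w + 2 ∈ S := by
  obtain ⟨s, hs, hadj⟩ := h (w + 1)
  rw [SimpleGraph.cycleGraph_adj'] at hadj
  rcases hadj with h' | h'
  · left
    have h1 : w + 1 - s = 1 := Fin.val_injective (h'.trans (val_one hn).symm)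
    have : s = w := by
      have := sub_eq_iff_eq_add.mp h1
      have : w + 1 = s + 1 := by rw [this]; open Fin.CommRing in ring
      exact (add_left_injective 1 this).symm
    rwa [this] at hs
  · right
    have h1 : s - (w + 1) = 1 := Fin.val_injective (h'.trans (val_one hn).symm)
    have : s = w + 2 := by
      have := sub_eq_iff_eq_add.mp h1
      rw [this]; open Fin.CommRing in ring
    rwa [this] at hs

lemma mem_shift {S : Finset (Fin n)} (w : Fin n) :
    w ∈ S.image (· - 2) ↔ w + 2 ∈ S := by
  simp only [mem_image]
  constructor
  · rintro ⟨a, ha, rfl⟩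
    simpa [sub_add_cancel] using ha
  · intro h
    exact ⟨w + 2, h, by open Fin.CommRing in ring⟩

lemma lb (hn : 2 ≤ n) {S : Finset (Fin n)} (h : IsTDS (SimpleGraph.cycleGraph n) S) :
    n ≤ 2 * S.card := by
  have hsub : (univ : Finset (Fin n)) ⊆ S ∪ S.image (· - 2) := by
    intro w _
    rcases cover hn h w with h' | h'
    · exact mem_union_left _ h'
    · exact mem_union_right _ ((mem_shift w).mpr h')
  calc n = (univ : Finset (Fin n)).card := by simp
    _ ≤ (S ∪ S.image (· - 2)).card := card_le_card hsub
    _ ≤ S.card + (S.image (· - 2)).card := card_union_le S (S.image (· - 2))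
    _ ≤ S.card + S.card := Nat.add_le_add_left card_image_le _
    _ = 2 * S.card := by ring

lemma alt (hn : 2 ≤ n) {S : Finset (Fin n)} (h : IsTDS (SimpleGraph.cycleGraph n) S)
    (hcard : n = 2 * S.card) (w : Fin n) : w ∈ S ↔ w + 2 ∉ S := by
  set T := S.image (· - 2) with hT
  have hcT : T.card = S.card := by
    apply card_image_of_injective
    intro a b hab
    rwa [sub_left_inj] at hab
  have hunion : S ∪ T = univ := by
    apply eq_univ_of_forall
    intro w
    rcases cover hn h w with h' | h'
    · exact mem_union_left _ h'
    · exact mem_union_right _ ((mem_shift w).mpr h')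
  have hdisj : S ∩ T = ∅ := by
    have h1 := card_union_add_card_inter S T
    rw [hunion, hcT] at h1
    have h2 : (univ : Finset (Fin n)).card = n := by simp
    have h3 : (S ∩ T).card = 0 := by omega
    exact card_eq_zero.mp h3
  constructor
  · intro hw hw2
    have : w ∈ S ∩ T := mem_inter.mpr ⟨hw, (mem_shift w).mpr hw2⟩
    rw [hdisj] at this
    exact absurd this (notMem_empty w)
  · intro hw2
    have hco := hunion.symm ▸ mem_univ w
    rcases mem_union.mp (hunion ▸ mem_univ w) with h' | h'
    · exact h'
    · exact absurd ((mem_shift w).mp h') hw2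

lemma sep (hn : 8 ≤ n) {A B : Finset (Fin n)}
    (hA : IsTDS (SimpleGraph.cycleGraph n) A) (hB : IsTDS (SimpleGraph.cycleGraph n) B)
    (hcA : n = 2 * A.card) (hcB : n = 2 * B.card) (hne : A ≠ B) :
    B.card + 2 ≤ (A ∪ B).card := by
  have hn2 : 2 ≤ n := by omega
  have hns : ¬ A ⊆ B := by
    intro hsub
    exact hne (eq_of_subset_of_card_le hsub (by omega))
  obtain ⟨w, hwA, hwB⟩ := not_subset.mp hns
  have hwA4 : w + 2 + 2 ∈ A := by
    have h1 := (alt hn2 hA hcA w).mp hwA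
    have h2 := (alt hn2 hA hcA (w + 2))
    tauto
  have hwB4 : w + 2 + 2 ∉ B := by
    have h1 : w + 2 ∈ B := by
      by_contra h'
      exact hwB ((alt hn2 hB hcB w).mpr h')
    intro h2
    exact (alt hn2 hB hcB (w + 2)).mp h1 h2
  have hne4 : w ≠ w + 2 + 2 := by
    intro h
    have h2 : w + (2 + 2) = w + 0 := by rw [add_zero, ← add_assoc]; exact h.symm
    have h3 : (2 + 2 : Fin n) = 0 := add_left_cancel h2
    have hv : ((2 : Fin n) + 2).val = 4 := by
      rw [Fin.val_add, val_two (by omega), Nat.mod_eq_of_lt (by omega)]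
    rw [h3] at hv
    simp at hv
  have hpair : {w, w + 2 + 2} ⊆ A \ B := by
    intro x hx
    rcases mem_insert.mp hx with rfl | hx
    · exact mem_sdiff.mpr ⟨hwA, hwB⟩
    · rw [mem_singleton.mp hx]
      exact mem_sdiff.mpr ⟨hwA4, hwB4⟩
  have h2le : 2 ≤ (A \ B).card := by
    calc 2 = ({w, w + 2 + 2} : Finset (Fin n)).card := (card_pair hne4).symm
      _ ≤ (A \ B).card := card_le_card hpair
  have := card_sdiff_add_card A B
  omega

end Stmt18Aux

open Stmt18Aux in
theorem stmt_18 (k : ℕ) (hk : 2 ≤ k) (n : ℕ) (hn : n = 4 * k) :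
    ¬ (TDGraph (SimpleGraph.cycleGraph n) (2 * k + 1)).Connected ∧
    ∀ A B : {S : Finset (Fin n) //
        IsTDS (SimpleGraph.cycleGraph n) S ∧ S.card ≤ 2 * k + 1},
      A.1.card = 2 * k → B.1.card = 2 * k → A ≠ B →
      ¬ (TDGraph (SimpleGraph.cycleGraph n) (2 * k + 1)).Reachable A B := by
  subst hn
  haveI : NeZero (4 * k) := ⟨by omega⟩
  have hn8 : 8 ≤ 4 * k := by omega
  have hn2 : 2 ≤ 4 * k := by omega
  have hdvd : 4 ∣ 4 * k := ⟨k, rfl⟩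
  set G := SimpleGraph.cycleGraph (4 * k) with hG
  -- Part 2
  have key : ∀ A B : {S : Finset (Fin (4 * k)) // IsTDS G S ∧ S.card ≤ 2 * k + 1},
      A.1.card = 2 * k → B.1.card = 2 * k → A ≠ B →
      ¬ (TDGraph G (2 * k + 1)).Reachable A B := by
    intro A B hA hB hAB hreach
    obtain ⟨p⟩ := hreach
    have inv : ∀ {C D : {S : Finset (Fin (4 * k)) // IsTDS G S ∧ S.card ≤ 2 * k + 1}},
        (TDGraph G (2 * k + 1)).Walk C D → A.1 ⊆ C.1 → A.1 ⊆ D.1 := by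
      intro C D p
      induction p with
      | nil => exact id
      | @cons C E D h p ih =>
        intro hAC
        apply ih
        rw [TDGraph, SimpleGraph.fromRel_adj] at h
        obtain ⟨hne, h⟩ := h
        rcases h with ⟨hsub, hcard⟩ | ⟨hsub, hcard⟩
        · exact hAC.trans hsub
        · -- E.1 ⊆ C.1, C.1.card = E.1.card + 1
          have hElb := lb hn2 E.2.1
          have hEub := C.2.2
          have hEcard : E.1.card = 2 * k := by omega
          by_cases hEA : E.1 = A.1
          · rw [hEA]
          · exfalso
            have hsep := sep hn8 A.2.1 E.2.1 (by omega) (by omega)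
              (fun h => hEA h.symm)
            have hunsub : A.1 ∪ E.1 ⊆ C.1 := union_subset hAC hsub
            have := card_le_card hunsub
            omega
    have hsub : A.1 ⊆ B.1 := inv p subset_rfl
    have : A.1 = B.1 := eq_of_subset_of_card_le hsub (by omega)
    exact hAB (Subtype.ext this)
  -- Explicit sets
  have val_add_mod4 : ∀ (v : Fin (4 * k)) (c : Fin (4 * k)),
      (v + c).val % 4 = (v.val + c.val) % 4 := by
    intro v c
    rw [Fin.val_add, Nat.mod_mod_of_dvd _ hdvd]
  set SA : Finset (Fin (4 * k)) := univ.filter (fun v => v.val % 4 < 2) with hSA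
  set SB : Finset (Fin (4 * k)) := univ.filter (fun v => ¬ v.val % 4 < 2) with hSB
  have hv1 : (1 : Fin (4 * k)).val = 1 := val_one hn2
  have hv2 : (2 : Fin (4 * k)).val = 2 := val_two (by omega)
  have hsubval : ∀ v : Fin (4 * k), (v - 1).val % 4 = (v.val + (4 * k - 1)) % 4 := by
    intro v
    rw [Fin.sub_def]
    simp only [hv1]
    rw [Nat.mod_mod_of_dvd _ hdvd]
    congr 1
    omega
  have hASmem : ∀ v : Fin (4 * k), v ∈ SA ↔ v.val % 4 < 2 := by
    intro v; simp [hSA]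
  have hBSmem : ∀ v : Fin (4 * k), v ∈ SB ↔ ¬ v.val % 4 < 2 := by
    intro v; simp [hSB]
  have hTDSA : IsTDS G SA := by
    intro v
    by_cases h0 : v.val % 4 = 0 ∨ v.val % 4 = 3
    · refine ⟨v + 1, ?_, adj_succ hn2 v⟩
      rw [hASmem]
      have := val_add_mod4 v 1
      rw [hv1] at this
      omega
    · refine ⟨v - 1, ?_, adj_pred hn2 v⟩
      rw [hASmem, hsubval]
      omega
  have hTDSB : IsTDS G SB := by
    intro v
    by_cases h0 : v.val % 4 = 1 ∨ v.val % 4 = 2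
    · refine ⟨v + 1, ?_, adj_succ hn2 v⟩
      rw [hBSmem]
      have := val_add_mod4 v 1
      rw [hv1] at this
      omega
    · refine ⟨v - 1, ?_, adj_pred hn2 v⟩
      rw [hBSmem, hsubval]
      omega
  -- cards
  have hcardAB : SA.card = SB.card := by
    apply le_antisymm
    · apply card_le_card_of_injOn (· + 2)
      · intro v hv
        simp only [mem_coe, hASmem] at hv
        simp only [mem_coe, hBSmem]
        have := val_add_mod4 v 2
        rw [hv2] at this
        omega
      · intro a _ b _ hab
        exact add_left_injective 2 hab
    · apply card_le_card_of_injOn (· + 2)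
      · intro v hv
        simp only [mem_coe, hBSmem] at hv
        simp only [mem_coe, hASmem]
        have := val_add_mod4 v 2
        rw [hv2] at this
        omega
      · intro a _ b _ hab
        exact add_left_injective 2 hab
  have hsum : SA.card + SB.card = 4 * k := by
    have := Finset.card_filter_add_card_filter_not
      (s := (univ : Finset (Fin (4 * k)))) (p := fun v => v.val % 4 < 2)
    simpa [hSA, hSB] using this
  have hcardA : SA.card = 2 * k := by omega
  have hcardB : SB.card = 2 * k := by omega
  have hAB : SA ≠ SB := by
    intro h
    have h0 : (0 : Fin (4 * k)) ∈ SA := by rw [hASmem]; simp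
    rw [h, hBSmem] at h0
    simp at h0
  refine ⟨?_, key⟩
  intro hconn
  exact key ⟨SA, hTDSA, by omega⟩ ⟨SB, hTDSB, by omega⟩ hcardA hcardB
    (fun h => hAB (congrArg Subtype.val h))
    (hconn.preconnected _ _)
end

section
/- Let G be a connected graph of order n with σ(G) stems. For any k ≥ γ_t(G), every total dominating set of G contains all σ(G) stems, hence D_k^t(G) has at most 2^{n−σ(G)} vertices and is isomorphic to a subgraph of the hypercube Q_{n−σ(G)}; furthermore, in D_n^t(G) the vertex V(G) has degree exactly n − σ(G), which equals the maximum degree of D_n^t(G). -/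
open Finset

variable {V : Type*} [Fintype V] [DecidableEq V]

/-- The total domination number. -/
noncomputable def gammaT (G : SimpleGraph V) : ℕ :=
  sInf {k | ∃ S : Finset V, IsTDS G S ∧ S.card = k}

/-- A leaf is a vertex of degree 1. -/
def IsLeaf (G : SimpleGraph V) (v : V) : Prop := (G.neighborSet v).ncard = 1

/-- A stem is a vertex adjacent to a leaf. -/
def IsStem (G : SimpleGraph V) (v : V) : Prop := ∃ u, IsLeaf G u ∧ G.Adj u v

open Classical in
/-- The set of stems of `G`. -/
noncomputable def stems (G : SimpleGraph V) : Finset V :=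
  Finset.univ.filter (fun v => IsStem G v)


lemma tds_stems_subset (G : SimpleGraph V) {S : Finset V} (hS : IsTDS G S) :
    stems G ⊆ S := by
  intro v hv
  simp only [stems, Finset.mem_filter] at hv
  obtain ⟨-, u, hu, huv⟩ := hv
  obtain ⟨s, hsS, hus⟩ := hS u
  obtain ⟨a, ha⟩ := Set.ncard_eq_one.mp hu
  have h1 : v ∈ G.neighborSet u := huv
  have h2 : s ∈ G.neighborSet u := hus
  rw [ha, Set.mem_singleton_iff] at h1 h2
  rwa [h1, ← h2]

/-- The hypercube graph on subsets of an `m`-set. -/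
def hypercube (m : ℕ) : SimpleGraph (Finset (Fin m)) :=
  SimpleGraph.fromRel (fun A B => A ⊆ B ∧ B.card = A.card + 1)

theorem stmt_19 (G : SimpleGraph V) (hG : G.Connected) (n : ℕ)
    (hn : n = Fintype.card V) (hn3 : 3 ≤ n) (k : ℕ) (hk : gammaT G ≤ k)
    (hU : IsTDS G (Finset.univ : Finset V))
    (hUcard : (Finset.univ : Finset V).card ≤ n) :
    (∀ S : Finset V, IsTDS G S → stems G ⊆ S) ∧
    Nat.card {S : Finset V // IsTDS G S ∧ S.card ≤ k} ≤ 2 ^ (n - (stems G).card) ∧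
    (∃ f : {S : Finset V // IsTDS G S ∧ S.card ≤ k} → Finset (Fin (n - (stems G).card)),
      Function.Injective f ∧
        ∀ A B, (TDGraph G k).Adj A B → (hypercube (n - (stems G).card)).Adj (f A) (f B)) ∧
    Set.ncard ((TDGraph G n).neighborSet ⟨Finset.univ, hU, hUcard⟩) = n - (stems G).card ∧
    (∀ B, Set.ncard ((TDGraph G n).neighborSet B) ≤ n - (stems G).card) := by
  classical
  have hstems : ∀ S : Finset V, IsTDS G S → stems G ⊆ S := fun S hS => tds_stems_subset G hS
  set σ := (stems G).card with hσ
  have hσn : σ ≤ n := by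
    rw [hn, ← Finset.card_univ]
    exact Finset.card_le_card (Finset.subset_univ _)
  have ecard : Fintype.card {v : V // ¬ v ∈ stems G} = n - σ := by
    rw [Fintype.card_subtype_compl, hn]
    congr 1
    exact Fintype.card_coe _
  let e : {v : V // ¬ v ∈ stems G} ≃ Fin (n - σ) := Fintype.equivFinOfCardEq ecard
  -- the embedding into the hypercube
  let f : {S : Finset V // IsTDS G S ∧ S.card ≤ k} → Finset (Fin (n - σ)) :=
    fun S => (S.1.subtype (fun v => ¬ v ∈ stems G)).map e.toEmbedding
  have hfmem : ∀ (S : {S : Finset V // IsTDS G S ∧ S.card ≤ k}) (i : Fin (n - σ)),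
      i ∈ f S ↔ (e.symm i).1 ∈ S.1 := by
    intro S i
    simp only [f, Finset.mem_map_equiv, Finset.mem_subtype]
  have hfinj : Function.Injective f := by
    intro S T hST
    apply Subtype.ext
    ext v
    by_cases hv : v ∈ stems G
    · constructor
      · intro _; exact hstems T.1 T.2.1 hv
      · intro _; exact hstems S.1 S.2.1 hv
    · have := hfmem S (e ⟨v, hv⟩)
      rw [hST] at this
      rw [hfmem T (e ⟨v, hv⟩)] at this
      simpa using this.symm
  have hfcard : ∀ (S : {S : Finset V // IsTDS G S ∧ S.card ≤ k}), (f S).card = S.1.card - σ := by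
    intro S
    have h1 : (f S).card = (S.1.filter (fun v => ¬ v ∈ stems G)).card := by
      simp [f, Finset.card_map, Finset.card_subtype]
    rw [h1, ← Finset.sdiff_eq_filter, Finset.card_sdiff_of_subset (hstems S.1 S.2.1)]
  have hcard2 : Nat.card {S : Finset V // IsTDS G S ∧ S.card ≤ k} ≤ 2 ^ (n - σ) := by
    have := Nat.card_le_card_of_injective f hfinj
    rwa [Nat.card_eq_fintype_card (α := Finset (Fin (n - σ))), Fintype.card_finset,
      Fintype.card_fin] at this
  have hhom : ∀ A B, (TDGraph G k).Adj A B → (hypercube (n - σ)).Adj (f A) (f B) := by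
    intro A B hAB
    rw [TDGraph, SimpleGraph.fromRel_adj] at hAB
    obtain ⟨hne, hrel⟩ := hAB
    rw [hypercube, SimpleGraph.fromRel_adj]
    refine ⟨fun h => hne (hfinj h), ?_⟩
    have key : ∀ (X Y : {S : Finset V // IsTDS G S ∧ S.card ≤ k}),
        X.1 ⊆ Y.1 → Y.1.card = X.1.card + 1 → f X ⊆ f Y ∧ (f Y).card = (f X).card + 1 := by
      intro X Y hsub hc
      constructor
      · exact Finset.map_subset_map.mpr (Finset.subtype_mono hsub)
      · rw [hfcard, hfcard, hc]
        have hσX : σ ≤ X.1.card := Finset.card_le_card (hstems X.1 X.2.1)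
        omega
    rcases hrel with h | h
    · exact Or.inl (key A B h.1 h.2)
    · exact Or.inr (key B A h.1 h.2)
  refine ⟨hstems, hcard2, ⟨f, hfinj, hhom⟩, ?_, ?_⟩
  · -- degree of univ is n - σ
    have hunivcard : (Finset.univ : Finset V).card = n := by rw [Finset.card_univ, hn]
    have htds_erase : ∀ v : V, ¬ v ∈ stems G → IsTDS G (Finset.univ.erase v) := by
      intro v hv w
      by_contra hcon
      push_neg at hcon
      have hall : ∀ s, G.Adj w s → s = v := by
        intro s hs
        by_contra hne
        exact hcon s (Finset.mem_erase.mpr ⟨hne, Finset.mem_univ s⟩) hs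
      obtain ⟨s0, -, hs0⟩ := hU w
      have hwv : G.Adj w v := (hall s0 hs0) ▸ hs0
      have hNw : G.neighborSet w = {v} := by
        ext x
        simp only [SimpleGraph.mem_neighborSet, Set.mem_singleton_iff]
        exact ⟨fun h => hall x h, fun h => h ▸ hwv⟩
      apply hv
      simp only [stems, Finset.mem_filter, Finset.mem_univ, true_and]
      exact ⟨w, by rw [IsLeaf, hNw]; exact Set.ncard_singleton v, hwv⟩
    let h : {v : V // ¬ v ∈ stems G} → {S : Finset V // IsTDS G S ∧ S.card ≤ n} :=
      fun v => ⟨Finset.univ.erase v.1, htds_erase v.1 v.2, by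
        rw [Finset.card_erase_of_mem (Finset.mem_univ _), hunivcard]; omega⟩
    have hhinj : Function.Injective h := by
      intro v w hvw
      have : (Finset.univ.erase v.1) = (Finset.univ.erase w.1) := congrArg Subtype.val hvw
      apply Subtype.ext
      by_contra hne
      have hw : w.1 ∈ Finset.univ.erase v.1 :=
        Finset.mem_erase.mpr ⟨fun hc => hne hc.symm, Finset.mem_univ _⟩
      rw [this] at hw
      exact (Finset.mem_erase.mp hw).1 rfl
    have hrange : (TDGraph G n).neighborSet ⟨Finset.univ, hU, hUcard⟩ = Set.range h := by
      ext B
      simp only [SimpleGraph.mem_neighborSet, Set.mem_range]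
      rw [TDGraph, SimpleGraph.fromRel_adj]
      constructor
      · rintro ⟨hne, h1 | h2⟩
        · exact absurd (Subtype.ext (Finset.univ_subset_iff.mp h1.1).symm) hne
        · obtain ⟨hsub, hc⟩ := h2
          have hcard1 : (Finset.univ \ B.1).card = 1 := by
            rw [Finset.card_sdiff_of_subset hsub]; omega
          obtain ⟨v, hv⟩ := Finset.card_eq_one.mp hcard1
          have hvB : ¬ v ∈ B.1 := by
            have : v ∈ Finset.univ \ B.1 := hv ▸ Finset.mem_singleton_self v
            exact (Finset.mem_sdiff.mp this).2
          have hvns : ¬ v ∈ stems G := fun hc => hvB (hstems B.1 B.2.1 hc)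
          refine ⟨⟨v, hvns⟩, ?_⟩
          apply Subtype.ext
          show Finset.univ.erase v = B.1
          ext w
          simp only [Finset.mem_erase, Finset.mem_univ, and_true]
          constructor
          · intro hw
            by_contra hwB
            have : w ∈ Finset.univ \ B.1 := Finset.mem_sdiff.mpr ⟨Finset.mem_univ w, hwB⟩
            rw [hv, Finset.mem_singleton] at this
            exact hw this
          · intro hw hc
            apply hvB
            rwa [hc] at hw
      · rintro ⟨v, rfl⟩
        constructor
        · intro hc
          have h2 : (Finset.univ : Finset V) = Finset.univ.erase v.1 :=
            congrArg Subtype.val hc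
          have h3 : v.1 ∈ (Finset.univ : Finset V) := Finset.mem_univ _
          rw [h2] at h3
          exact (Finset.mem_erase.mp h3).1 rfl
        · right
          refine ⟨Finset.erase_subset _ _, ?_⟩
          rw [Finset.card_erase_of_mem (Finset.mem_univ _), hunivcard]
          omega
    rw [hrange, ← Set.image_univ, Set.ncard_image_of_injective _ hhinj, Set.ncard_univ,
      Nat.card_eq_fintype_card, ecard]
  · -- max degree
    intro B
    have hinj2 : ∃ φ : ((TDGraph G n).neighborSet B) → {v : V // ¬ v ∈ stems G},
        Function.Injective φ := by
      have key : ∀ C : ((TDGraph G n).neighborSet B),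
          ∃ v : V, symmDiff C.1.1 B.1 = {v} ∧ ¬ v ∈ stems G := by
        rintro ⟨C, hC⟩
        simp only [SimpleGraph.mem_neighborSet] at hC
        rw [TDGraph, SimpleGraph.fromRel_adj] at hC
        obtain ⟨hne, h1 | h2⟩ := hC
        · -- B ⊆ C
          obtain ⟨hsub, hc⟩ := h1
          have hd : symmDiff C.1 B.1 = C.1 \ B.1 := by
            rw [symmDiff_def]
            simp [Finset.sdiff_eq_empty_iff_subset.mpr hsub]
          have hcard1 : (C.1 \ B.1).card = 1 := by
            rw [Finset.card_sdiff_of_subset hsub]; omega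
          obtain ⟨v, hv⟩ := Finset.card_eq_one.mp hcard1
          refine ⟨v, by rw [hd, hv], ?_⟩
          have hvB : ¬ v ∈ B.1 := by
            have : v ∈ C.1 \ B.1 := hv ▸ Finset.mem_singleton_self v
            exact (Finset.mem_sdiff.mp this).2
          exact fun hc => hvB (hstems B.1 B.2.1 hc)
        · obtain ⟨hsub, hc⟩ := h2
          have hd : symmDiff C.1 B.1 = B.1 \ C.1 := by
            rw [symmDiff_def]
            simp [Finset.sdiff_eq_empty_iff_subset.mpr hsub]
          have hcard1 : (B.1 \ C.1).card = 1 := by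
            rw [Finset.card_sdiff_of_subset hsub]; omega
          obtain ⟨v, hv⟩ := Finset.card_eq_one.mp hcard1
          refine ⟨v, by rw [hd, hv], ?_⟩
          have hvC : ¬ v ∈ C.1 := by
            have : v ∈ B.1 \ C.1 := hv ▸ Finset.mem_singleton_self v
            exact (Finset.mem_sdiff.mp this).2
          exact fun hcc => hvC (hstems C.1 C.2.1 hcc)
      choose φv hφ1 hφ2 using key
      refine ⟨fun C => ⟨φv C, hφ2 C⟩, ?_⟩
      intro C1 C2 h12
      have hveq : φv C1 = φv C2 := congrArg Subtype.val h12
      have : symmDiff C1.1.1 B.1 = symmDiff C2.1.1 B.1 := by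
        rw [hφ1 C1, hφ1 C2, hveq]
      have := symmDiff_left_injective B.1 this
      exact Subtype.ext (Subtype.ext this)
    obtain ⟨φ, hφinj⟩ := hinj2
    have := Nat.card_le_card_of_injective φ hφinj
    rw [Nat.card_eq_fintype_card (α := {v : V // ¬ v ∈ stems G}), ecard] at this
    rwa [Set.ncard_eq_toFinset_card', Set.toFinset_card, ← Nat.card_eq_fintype_card]
end
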